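/- Let c be a fully invariant congruence on F such that c ⊆ σ_C2 and c ⊄ σ_E. Then there exist p, q ≥ 1 and r ≥ 2 such that c (xᵖ · y · x^q) (y · x^r). (In variety language: if a monoid variety V contains C2 but does not contain E = var{x² ≈ x³, x²y ≈ xyx, x²y² ≈ y²x²}, then V satisfies the identity xᵖyx^q ≈ yx^r for some p, q ≥ 1 and r ≥ 2.) -/

import Mathlib

/-- The free monoid on countably many generators. -/
abbrev F : Type := FreeMonoid ℕ

/-- The fixed pairwise distinct generators. -/
def x : F := FreeMonoid.of 0
def y : F := FreeMonoid.of 1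
def z : F := FreeMonoid.of 2
def t : F := FreeMonoid.of 3

/-- A congruence on `F` is fully invariant if it is stable under every
monoid endomorphism of `F`. -/
def IsFullyInvariant (c : Con F) : Prop :=
  ∀ ξ : F →* F, ∀ u v : F, c u v → c (ξ u) (ξ v)

/-- The type of fully invariant congruences on `F`. -/
abbrev FICon : Type := {c : Con F // IsFullyInvariant c}

instance : InfSet FICon :=
  ⟨fun S => ⟨sInf (Subtype.val '' S), fun ξ u v h c hc => by
    obtain ⟨d, hd, rfl⟩ := hc
    exact d.2 ξ u v (h d.1 ⟨d, hd, rfl⟩)⟩⟩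

/-- The complete lattice of fully invariant congruences on `F`:
meets are intersections, joins are the smallest fully invariant congruences
containing the union, `⊥` is the equality relation and `⊤` is the all relation. -/
noncomputable instance : CompleteLattice FICon :=
  completeLatticeOfInf FICon (fun S =>
    ⟨fun c hc => fun u v h => h c.1 ⟨c, hc, rfl⟩,
     fun c hc => fun u v h d hd => by
        obtain ⟨e, he, rfl⟩ := hd
        exact hc he h⟩)

/-- `fic S` is the smallest fully invariant congruence on `F` containing the
set `S` of pairs of words. -/
noncomputable def fic (S : Set (F × F)) : FICon :=
  sInf {c : FICon | ∀ p ∈ S, c.1 p.1 p.2}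

noncomputable def sigmaC2 : FICon := fic {(x ^ 3, x ^ 2), (x * y, y * x)}

noncomputable def sigmaE : FICon :=
  fic {(x ^ 3, x ^ 2), (x ^ 2 * y, x * y * x), (x ^ 2 * y ^ 2, y ^ 2 * x ^ 2)}

/-!
Pick `u, v` with `c u v` but not `u σ_E v`. As `c ⊆ σ_C2`, the words `u` and `v` have the same
letters occurring once and the same letters occurring at least twice. Modulo `σ_E` (by `x³ ≈ x²`
and `xyx ≈ x²y`) a word equals the product of the blocks `a ^ min k 2`, `k` the number of
occurrences of `a`, placed at the first occurrences of its letters; two such block words are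
`σ_E`-equivalent as soon as every letter occurring once has the same letters before it (the
squares commute by `x²y² ≈ y²x²`). Hence some letter `s` occurs once and some letter `a` occurs
before `s` in `v` but not in `u`. Erasing all other letters and renaming `a ↦ x`, `s ↦ y` turns
`c u v` into `c (y xᵏ) (xᵖ y x^q)` with `k, p ≥ 1`; multiplying by `x` on the right gives the
identity.
-/

open FreeMonoid
open scoped List

namespace List

variable {α : Type*}

lemma pair_sublist_append_cons_left_iff {a b : α} {X Y : List α} (ha : a ∉ X) :
    [a, b] <+ X ++ a :: Y ↔ b ∈ Y := by
  refine ⟨fun h => ?_, fun h => (cons_sublist_cons.mpr (singleton_sublist.mpr h)).trans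
    (sublist_append_right X _)⟩
  obtain ⟨l₁, l₂, hl, h₁, h₂⟩ := sublist_append_iff.mp h
  cases l₁ with
  | nil =>
    rw [nil_append] at hl
    subst hl
    exact singleton_sublist.mp (cons_sublist_cons.mp h₂)
  | cons c l =>
    obtain rfl : c = a := (cons.inj hl).1.symm
    exact absurd (h₁.subset mem_cons_self) ha

lemma pair_sublist_append_cons_right_iff {a b : α} {X Y : List α} (hb : b ∉ Y) (hab : a ≠ b) :
    [a, b] <+ X ++ b :: Y ↔ a ∈ X := by
  refine ⟨fun h => ?_, fun h => (singleton_sublist.mpr h).append (by simp)⟩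
  obtain ⟨l₁, l₂, hl, h₁, h₂⟩ := sublist_append_iff.mp h
  cases l₁ with
  | nil =>
    rw [nil_append] at hl
    subst hl
    rcases sublist_cons_iff.mp h₂ with h₂ | ⟨r, hr, -⟩
    · exact absurd (h₂.subset (by simp)) hb
    · exact absurd (cons.inj hr).1 hab
  | cons c l =>
    obtain rfl : c = a := (cons.inj hl).1.symm
    exact h₁.subset mem_cons_self

lemma sublist_append_cons_iff {a : α} {l X Y : List α} (ha : a ∉ l) :
    l <+ X ++ a :: Y ↔ l <+ X ++ Y := by
  refine ⟨fun h => ?_, fun h => h.trans ((sublist_cons_self a Y).append_left X)⟩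
  obtain ⟨l₁, l₂, rfl, h₁, h₂⟩ := sublist_append_iff.mp h
  rcases sublist_cons_iff.mp h₂ with h₂ | ⟨r, rfl, -⟩
  · exact h₁.append h₂
  · exact absurd (by simp) ha

lemma cons_sublist_cons_iff_of_ne {a b : α} {l L : List α} (hab : a ≠ b) :
    a :: l <+ b :: L ↔ a :: l <+ L := by
  rw [sublist_cons_iff]
  exact ⟨fun h => h.resolve_right fun ⟨_, hr, _⟩ => hab (cons.inj hr).1, Or.inl⟩

lemma exists_eq_append_cons_of_count_eq_one [BEq α] [LawfulBEq α] {a : α} {l : List α}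
    (h : l.count a = 1) : ∃ A B, l = A ++ a :: B ∧ a ∉ A ∧ a ∉ B := by
  obtain ⟨A, B, rfl⟩ := append_of_mem (count_pos_iff.mp (show 0 < l.count a by omega))
  rw [count_append, count_cons_self] at h
  exact ⟨A, B, rfl, count_eq_zero.mp (by omega), count_eq_zero.mp (by omega)⟩

lemma forall_mem_not_and_not_of_pair_sublist_iff {P : α → Prop} {c : α} {l X Y : List α}
    (hnd : (X ++ c :: Y).Nodup) (hcl : c ∉ l) (hXl : ∀ b ∈ X, b ∈ l)
    (hord : ∀ s a, P s → a ≠ s → ([a, s] <+ c :: l ↔ [a, s] <+ X ++ c :: Y)) :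
    ∀ b ∈ X, ¬ P b ∧ ¬ P c := by
  obtain ⟨hcXY, hXY⟩ := nodup_cons.mp (nodup_middle.mp hnd)
  intro b hb
  have hbc : b ≠ c := fun h => hcXY (h ▸ mem_append_left Y hb)
  refine ⟨fun hPb => ?_, fun hPc => ?_⟩
  · have hcb : [c, b] <+ X ++ c :: Y :=
      (hord b c hPb (Ne.symm hbc)).mp (cons_sublist_cons.mpr (singleton_sublist.mpr (hXl b hb)))
    exact disjoint_of_nodup_append hXY hb
      ((pair_sublist_append_cons_left_iff fun h => hcXY (mem_append_left Y h)).mp hcb)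
  · have hbc' : [b, c] <+ c :: l :=
      (hord c b hPc hbc).mpr ((singleton_sublist.mpr hb).append (by simp))
    exact hcl (((cons_sublist_cons_iff_of_ne hbc).mp hbc').subset (by simp))

section DedupFirst

variable [DecidableEq α]

/-- Like `List.dedup`, but keeping first rather than last occurrences. -/
def dedupFirst : List α → List α
  | [] => []
  | a :: l => a :: dedupFirst (l.filter (· ≠ a))
termination_by l => l.length
decreasing_by simp; exact (length_filter_le _ _).trans length_attach.le

lemma dedupFirst_cons (a : α) (l : List α) :
    dedupFirst (a :: l) = a :: dedupFirst (l.filter (· ≠ a)) := by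
  rw [dedupFirst]

@[elab_as_elim]
lemma filter_ne_induction {motive : List α → Prop} (nil : motive [])
    (cons : ∀ a l, motive (l.filter (· ≠ a)) → motive (a :: l)) (l : List α) : motive l := by
  induction h : l.length using Nat.strong_induction_on generalizing l with
  | _ n ih =>
    cases l with
    | nil => exact nil
    | cons a l =>
      subst h
      exact cons a l (ih _ (Nat.lt_succ_of_le (length_filter_le _ _)) _ rfl)

@[simp]
lemma mem_dedupFirst {a : α} (l : List α) : a ∈ dedupFirst l ↔ a ∈ l := by
  induction l using filter_ne_induction with
  | nil => simp [dedupFirst]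
  | cons b l ih =>
    rw [dedupFirst_cons, mem_cons, ih, mem_filter, mem_cons]
    by_cases hab : a = b <;> simp [hab]

lemma nodup_dedupFirst (l : List α) : (dedupFirst l).Nodup := by
  induction l using filter_ne_induction with
  | nil => simp [dedupFirst]
  | cons b l ih =>
    rw [dedupFirst_cons, nodup_cons, mem_dedupFirst, mem_filter]
    exact ⟨by simp, ih⟩

lemma pair_sublist_dedupFirst_iff {a b : α} (hab : a ≠ b) :
    ∀ l : List α, l.count b = 1 → ([a, b] <+ dedupFirst l ↔ [a, b] <+ l) := by
  intro l
  induction l using filter_ne_induction with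
  | nil => simp
  | cons c l ih =>
    intro hb
    rw [dedupFirst_cons]
    by_cases hca : c = a
    · subst hca
      rw [cons_sublist_cons, cons_sublist_cons, singleton_sublist, singleton_sublist,
        mem_dedupFirst, mem_filter]
      simp [Ne.symm hab]
    by_cases hcb : c = b
    · subst hcb
      have hbl : c ∉ l := count_eq_zero.mp (by simpa using hb)
      rw [cons_sublist_cons_iff_of_ne (Ne.symm hca), cons_sublist_cons_iff_of_ne (Ne.symm hca)]
      constructor <;> intro h
      · simpa using h.subset (by simp : c ∈ [a, c])
      · exact absurd (h.subset (by simp)) hbl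
    rw [cons_sublist_cons_iff_of_ne (Ne.symm hca), cons_sublist_cons_iff_of_ne (Ne.symm hca),
      ih (by rwa [count_filter (by simpa using Ne.symm hcb), ← count_cons_of_ne hcb])]
    exact ⟨fun h => h.trans filter_sublist, fun h => by
      simpa [Ne.symm hca, Ne.symm hcb] using h.filter (· ≠ c)⟩

end DedupFirst

end List

lemma min_mul_eq_min_mul {a b k : ℕ} (h : min a k = min b k) (g : ℕ) :
    min (a * g) k = min (b * g) k := by
  rcases Nat.eq_zero_or_pos g with rfl | hg
  · simp
  by_cases hab : a = b
  · rw [hab]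
  have ha : k ≤ a * g := (show k ≤ a by omega).trans (Nat.le_mul_of_pos_right a hg)
  have hb : k ≤ b * g := (show k ≤ b by omega).trans (Nat.le_mul_of_pos_right b hg)
  rw [min_eq_right ha, min_eq_right hb]

lemma min_sum_eq_min_sum {ι : Type*} (s : Finset ι) {f g : ι → ℕ} {k : ℕ}
    (h : ∀ i, min (f i) k = min (g i) k) :
    min (∑ i ∈ s, f i) k = min (∑ i ∈ s, g i) k := by
  classical
  induction s using Finset.induction_on with
  | empty => simp
  | insert a s ha ih =>
    rw [Finset.sum_insert ha, Finset.sum_insert ha]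
    have := h a
    omega

lemma min_sum_map_eq_min_sum_map {l₁ l₂ : List ℕ} {k : ℕ}
    (h : ∀ n, min (l₁.count n) k = min (l₂.count n) k) (g : ℕ → ℕ) :
    min (l₁.map g).sum k = min (l₂.map g).sum k := by
  rcases Nat.eq_zero_or_pos k with rfl | hk
  · simp
  have hfin : l₁.toFinset = l₂.toFinset := by
    ext n
    simp only [List.mem_toFinset, ← List.count_pos_iff]
    have := h n
    omega
  rw [Finset.sum_list_map_count, Finset.sum_list_map_count, hfin]
  exact min_sum_eq_min_sum _ fun n => min_mul_eq_min_mul (h n) (g n)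

lemma fic_rel_of_mem {S : Set (F × F)} {p : F × F} (hp : p ∈ S) (ξ : F →* F) :
    (fic S).1 (ξ p.1) (ξ p.2) :=
  (fic S).2 ξ _ _ fun _ ⟨_, hd, hdc⟩ => hdc ▸ hd p hp

lemma fic_le {S : Set (F × F)} {d : FICon} (h : ∀ p ∈ S, d.1 p.1 p.2) : fic S ≤ d :=
  sInf_le h

lemma count_toList_hom_apply (ξ : F →* F) (w : F) (n : ℕ) :
    (ξ w).toList.count n = (w.toList.map fun b => (ξ (of b)).toList.count n).sum := by
  conv_lhs => rw [← FreeMonoid.lift_restrict ξ, ← ofList_toList w, FreeMonoid.lift_ofList]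
  simp [FreeMonoid.toList_prod, List.count_flatten, Function.comp_def]

def capCon : Con F where
  r u v := ∀ n, min (u.toList.count n) 2 = min (v.toList.count n) 2
  iseqv := ⟨fun _ _ => rfl, fun h n => (h n).symm, fun h₁ h₂ n => (h₁ n).trans (h₂ n)⟩
  mul' h₁ h₂ n := by
    have := h₁ n
    have := h₂ n
    simp only [toList_mul, List.count_append]
    omega

lemma capCon_isFullyInvariant : IsFullyInvariant capCon := fun ξ u v h n => by
  rw [count_toList_hom_apply, count_toList_hom_apply]
  exact min_sum_map_eq_min_sum_map h _

lemma sigmaC2_le_capCon : sigmaC2 ≤ ⟨capCon, capCon_isFullyInvariant⟩ := by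
  refine fic_le fun p hp => ?_
  rcases hp with rfl | rfl
  · intro n
    rcases eq_or_ne n 0 with rfl | hn
    · rfl
    · simp [x, pow_succ, hn.symm]
  · intro n
    exact congrArg (min · 2) ((List.Perm.swap 1 0 []).count_eq n)

def substXY (u v : F) : F →* F := FreeMonoid.lift fun n => if n = 0 then u else v

lemma sigmaE_pow_three (u : F) : sigmaE.1 (u ^ 3) (u ^ 2) := by
  have h : sigmaE.1 _ _ := fic_rel_of_mem (p := (x ^ 3, x ^ 2)) (by simp) (substXY u 1)
  simpa [substXY, x, y] using h

lemma sigmaE_sq_mul (u v : F) : sigmaE.1 (u ^ 2 * v) (u * v * u) := by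
  have h : sigmaE.1 _ _ := fic_rel_of_mem (p := (x ^ 2 * y, x * y * x)) (by simp) (substXY u v)
  simpa [substXY, x, y] using h

lemma sigmaE_sq_comm (u v : F) : sigmaE.1 (u ^ 2 * v ^ 2) (v ^ 2 * u ^ 2) := by
  have h : sigmaE.1 _ _ :=
    fic_rel_of_mem (p := (x ^ 2 * y ^ 2, y ^ 2 * x ^ 2)) (by simp) (substXY u v)
  simpa [substXY, x, y] using h

lemma sigmaE_mul_left (w : F) {u v : F} (h : sigmaE.1 u v) : sigmaE.1 (w * u) (w * v) :=
  sigmaE.1.mul (sigmaE.1.refl w) h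

lemma sigmaE_pow_succ (u : F) {n : ℕ} (hn : 2 ≤ n) : sigmaE.1 (u ^ (n + 1)) (u ^ n) := by
  obtain ⟨k, rfl⟩ := Nat.exists_eq_add_of_le hn
  rw [show 2 + k + 1 = k + 3 by omega, show 2 + k = k + 2 by omega, pow_add, pow_add]
  exact sigmaE_mul_left _ (sigmaE_pow_three u)

lemma sigmaE_pow_min_two (u : F) (n : ℕ) : sigmaE.1 (u ^ n) (u ^ min n 2) := by
  induction n with
  | zero => exact sigmaE.1.refl _
  | succ n ih =>
    rcases Nat.lt_or_ge n 2 with hn | hn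
    · rw [min_eq_left (by omega)]
      exact sigmaE.1.refl _
    · rw [min_eq_right (by omega)]
      rw [min_eq_right hn] at ih
      exact sigmaE.1.trans (sigmaE_pow_succ u hn) ih

-- Each later `c` is brought forward by `c u c ≈ c² u`.
lemma sigmaE_pull (c : ℕ) (B : List ℕ) : ∀ M : List ℕ, sigmaE.1 (of c * ofList M * ofList B)
    (of c ^ (B.count c + 1) * ofList M * ofList (B.filter (· ≠ c))) := by
  induction B with
  | nil => simp [sigmaE.1.refl]
  | cons b B ih =>
    intro M
    by_cases hbc : b = c
    · subst hbc
      have h : sigmaE.1 (of b * ofList M * ofList (b :: B))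
          (of b * (of b * ofList M * ofList B)) := by
        simpa [ofList_cons, pow_two, mul_assoc] using
          sigmaE.1.mul (sigmaE.1.symm (sigmaE_sq_mul (of b) (ofList M))) (sigmaE.1.refl (ofList B))
      simpa [pow_succ', mul_assoc] using sigmaE.1.trans h (sigmaE_mul_left (of b) (ih M))
    · simpa [ofList_cons, ofList_append, List.filter_cons, hbc, List.count_cons, mul_assoc] using
        ih (M ++ [b])

def blockWord (m : ℕ → ℕ) (L : List ℕ) : F := (L.map fun a => of a ^ m a).prod

@[simp]
lemma blockWord_cons (m : ℕ → ℕ) (a : ℕ) (L : List ℕ) :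
    blockWord m (a :: L) = of a ^ m a * blockWord m L := by
  simp [blockWord]

lemma sigmaE_ofList_blockWord_dedupFirst (w : List ℕ) :
    ∀ m : ℕ → ℕ, (∀ a ∈ w, m a = min (w.count a) 2) →
      sigmaE.1 (ofList w) (blockWord m w.dedupFirst) := by
  induction w using List.filter_ne_induction with
  | nil => simp [List.dedupFirst, blockWord, sigmaE.1.refl]
  | cons c l ih =>
    intro m hm
    have hpull : sigmaE.1 (ofList (c :: l))
        (of c ^ (l.count c + 1) * ofList (l.filter (· ≠ c))) := by
      simpa using sigmaE_pull c l []
    have hcap : sigmaE.1 (of c ^ (l.count c + 1)) (of c ^ m c) := by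
      rw [hm c List.mem_cons_self, List.count_cons_self]
      exact sigmaE_pow_min_two _ _
    have htail := ih m fun a ha => by
      obtain ⟨ha, hac⟩ : a ∈ l ∧ a ≠ c := by simpa using ha
      rw [hm a (List.mem_cons_of_mem c ha), List.count_filter (by simpa using hac),
        List.count_cons_of_ne (Ne.symm hac)]
    rw [List.dedupFirst_cons, blockWord_cons]
    exact sigmaE.1.trans hpull (sigmaE.1.mul hcap htail)

lemma sigmaE_blockWord_bubble {m : ℕ → ℕ} {c : ℕ} (Y : List ℕ) :
    ∀ X : List ℕ, (∀ b ∈ X, m b = 2 ∧ m c = 2) →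
      sigmaE.1 (blockWord m (X ++ c :: Y)) (blockWord m (c :: (X ++ Y))) := by
  intro X
  induction X with
  | nil => exact fun _ => sigmaE.1.refl _
  | cons b X ih =>
    intro hX
    obtain ⟨hb, hc⟩ := hX b List.mem_cons_self
    have h := sigmaE_mul_left (of b ^ m b) (ih fun b hb => hX b (List.mem_cons_of_mem _ hb))
    simp only [List.cons_append, blockWord_cons, hb, hc, ← mul_assoc] at h ⊢
    exact sigmaE.1.trans h (sigmaE.1.mul (sigmaE_sq_comm _ _) (sigmaE.1.refl _))

lemma sigmaE_blockWord_of_perm {m : ℕ → ℕ} {P : ℕ → Prop} {L₁ : List ℕ} :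
    ∀ {L₂ : List ℕ}, L₁.Nodup → L₁.Perm L₂ →
      (∀ s a, P s → a ≠ s → ([a, s] <+ L₁ ↔ [a, s] <+ L₂)) → (∀ n ∈ L₁, ¬ P n → m n = 2) →
      sigmaE.1 (blockWord m L₁) (blockWord m L₂) := by
  induction L₁ with
  | nil =>
    intro L₂ _ hperm _ _
    rw [← hperm.nil_eq]
    exact sigmaE.1.refl _
  | cons c l ih =>
    intro L₂ hnd hperm hord hm
    -- `c` is moved to the front of `L₂ = X ++ c :: Y`, past the squares of the letters of `X`.
    obtain ⟨X, Y, rfl⟩ := List.append_of_mem (hperm.subset List.mem_cons_self)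
    obtain ⟨hcl, hl⟩ := List.nodup_cons.mp hnd
    have hperm' : l.Perm (X ++ Y) := (hperm.trans List.perm_middle).cons_inv
    have hcXY : c ∉ X ++ Y :=
      (List.nodup_cons.mp (List.nodup_middle.mp (hperm.nodup_iff.mp hnd))).1
    have hXl : ∀ b ∈ X, b ∈ l := fun b hb => hperm'.symm.subset (List.mem_append_left Y hb)
    have hX := List.forall_mem_not_and_not_of_pair_sublist_iff (hperm.nodup_iff.mp hnd) hcl hXl hord
    have hbubble : sigmaE.1 (blockWord m (c :: (X ++ Y))) (blockWord m (X ++ c :: Y)) :=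
      sigmaE.1.symm (sigmaE_blockWord_bubble Y X fun b hb =>
        ⟨hm b (List.mem_cons_of_mem c (hXl b hb)) (hX b hb).1, hm c List.mem_cons_self (hX b hb).2⟩)
    have hord' : ∀ s a, P s → a ≠ s → ([a, s] <+ l ↔ [a, s] <+ X ++ Y) := by
      intro s a hPs has
      by_cases hc : a = c ∨ s = c
      · have hc' : c ∈ [a, s] := by rcases hc with rfl | rfl <;> simp
        exact iff_of_false (fun h => hcl (h.subset hc')) (fun h => hcXY (h.subset hc'))
      · push Not at hc
        rw [← List.sublist_append_cons_iff (a := c) (by simp [Ne.symm hc.1, Ne.symm hc.2]),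
          ← hord s a hPs has, List.cons_sublist_cons_iff_of_ne hc.1]
    have hrec := ih hl hperm' hord' fun n hn => hm n (List.mem_cons_of_mem c hn)
    rw [blockWord_cons]
    exact sigmaE.1.trans (by simpa using sigmaE_mul_left _ hrec) hbubble

lemma sigmaE_of_capCon_of_precedes_iff {lu lv : List ℕ} (hcap : capCon (ofList lu) (ofList lv))
    (hord : ∀ s a, a ≠ s → lu.count s = 1 → ([a, s] <+ lu ↔ [a, s] <+ lv)) :
    sigmaE.1 (ofList lu) (ofList lv) := by
  have hcount : ∀ n, min (lu.count n) 2 = min (lv.count n) 2 := hcap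
  set m : ℕ → ℕ := fun n => min (lu.count n) 2
  have hu := sigmaE_ofList_blockWord_dedupFirst lu m fun _ _ => rfl
  have hv := sigmaE_ofList_blockWord_dedupFirst lv m fun n _ => hcount n
  have hperm : lu.dedupFirst.Perm lv.dedupFirst := by
    refine (List.perm_ext_iff_of_nodup (List.nodup_dedupFirst _) (List.nodup_dedupFirst _)).mpr
      fun n => ?_
    rw [List.mem_dedupFirst, List.mem_dedupFirst, ← List.count_pos_iff, ← List.count_pos_iff]
    have := hcount n
    omega
  have hsort : sigmaE.1 (blockWord m lu.dedupFirst) (blockWord m lv.dedupFirst) := by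
    refine sigmaE_blockWord_of_perm (P := fun n => lu.count n = 1) (List.nodup_dedupFirst _) hperm
      (fun s a hs has => ?_) (fun n hn hn1 => ?_)
    · have hsv : lv.count s = 1 := by have := hcount s; omega
      rw [List.pair_sublist_dedupFirst_iff has lu hs, List.pair_sublist_dedupFirst_iff has lv hsv,
        hord s a has hs]
    · have := List.count_pos_iff.mpr ((List.mem_dedupFirst lu).mp hn)
      simp only [m]
      omega
  exact sigmaE.1.trans hu (sigmaE.1.trans hsort (sigmaE.1.symm hv))

def projXY (a s : ℕ) : F →* F :=
  FreeMonoid.lift fun n => if n = a then x else if n = s then y else 1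

lemma projXY_ofList_of_not_mem {a s : ℕ} {A : List ℕ} (hs : s ∉ A) :
    projXY a s (ofList A) = x ^ A.count a := by
  induction A with
  | nil => simp
  | cons b A ih =>
    obtain ⟨hbs, hs⟩ : b ≠ s ∧ s ∉ A := by simpa [eq_comm] using hs
    rw [ofList_cons, map_mul, ih hs]
    by_cases hba : b = a
    · subst hba
      simp [projXY, List.count_cons_self, pow_succ']
    · simp [projXY, hba, hbs, List.count_cons_of_ne hba]

lemma projXY_ofList_append_cons {a s : ℕ} {A B : List ℕ} (has : a ≠ s) (hA : s ∉ A)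
    (hB : s ∉ B) : projXY a s (ofList (A ++ s :: B)) = x ^ A.count a * y * x ^ B.count a := by
  rw [ofList_append, ofList_cons, map_mul, map_mul, projXY_ofList_of_not_mem hA,
    projXY_ofList_of_not_mem hB]
  simp [projXY, has.symm, mul_assoc]

lemma exists_xpyxq_of_not_precedes {c : Con F} (hc : IsFullyInvariant c) {lu lv : List ℕ}
    (huv : c (ofList lu) (ofList lv)) {a s : ℕ} (ha : a ∈ lu) (hsu : lu.count s = 1)
    (hsv : lv.count s = 1) (hu : ¬ [a, s] <+ lu) (hv : [a, s] <+ lv) :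
    ∃ p q r : ℕ, 1 ≤ p ∧ 1 ≤ q ∧ 2 ≤ r ∧ c (x ^ p * y * x ^ q) (y * x ^ r) := by
  have has : a ≠ s := by
    rintro rfl
    simpa [hsv] using hv.count_le a
  obtain ⟨A, B, rfl, hsA, hsB⟩ := List.exists_eq_append_cons_of_count_eq_one hsu
  obtain ⟨A', B', rfl, hsA', hsB'⟩ := List.exists_eq_append_cons_of_count_eq_one hsv
  rw [List.pair_sublist_append_cons_right_iff hsB has] at hu
  rw [List.pair_sublist_append_cons_right_iff hsB' has] at hv
  have haB : a ∈ B := by simpa [hu, has] using ha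
  have h := hc (projXY a s) _ _ huv
  rw [projXY_ofList_append_cons has hsA hsB, projXY_ofList_append_cons has hsA' hsB',
    List.count_eq_zero.mpr hu, pow_zero, one_mul] at h
  refine ⟨A'.count a, B'.count a + 1, B.count a + 1, List.count_pos_iff.mpr hv, by omega,
    by simpa using List.count_pos_iff.mpr haB, ?_⟩
  simpa [pow_succ, mul_assoc] using c.mul (c.symm h) (c.refl x)

/-- If a fully invariant congruence `c` on `F` satisfies `c ⊆ σ_C2` and
`c ⊄ σ_E`, then `c` relates `xᵖyx^q` and `yx^r` for some `p, q ≥ 1` and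
`r ≥ 2`.  (In variety language: a monoid variety containing `C₂` but not `E`
satisfies `xᵖyx^q ≈ yx^r`.) -/
theorem satisfies_xpyxq (c : FICon) (h₁ : c ≤ sigmaC2) (h₂ : ¬ c ≤ sigmaE) :
    ∃ p q r : ℕ, 1 ≤ p ∧ 1 ≤ q ∧ 2 ≤ r ∧ c.1 (x ^ p * y * x ^ q) (y * x ^ r) := by
  obtain ⟨u, v, huv, hE⟩ : ∃ u v, c.1 u v ∧ ¬ sigmaE.1 u v := by
    by_contra! h
    exact h₂ fun u v huv => h u v huv
  have hcap : capCon u v := sigmaC2_le_capCon (h₁ huv)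
  obtain ⟨s, a, has, hsu, hne⟩ : ∃ s a, a ≠ s ∧ u.toList.count s = 1 ∧
      ¬ ([a, s] <+ u.toList ↔ [a, s] <+ v.toList) := by
    by_contra! h
    exact hE (sigmaE_of_capCon_of_precedes_iff hcap h)
  have hsv : v.toList.count s = 1 := by have := hcap s; omega
  have hmem : a ∈ u.toList ↔ a ∈ v.toList := by
    simp only [← List.count_pos_iff]
    have := hcap a
    omega
  by_cases hu : [a, s] <+ u.toList
  · exact exists_xpyxq_of_not_precedes c.2 (c.1.symm huv) (hmem.mp (hu.subset (by simp))) hsv hsu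
      (fun hv => hne (iff_of_true hu hv)) hu
  · have hv : [a, s] <+ v.toList := by tauto
    exact exists_xpyxq_of_not_precedes c.2 huv (hmem.mpr (hv.subset (by simp))) hsu hsv hu hv
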